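/- arXiv:2405.18686 — 3 statements merged into one kernel-verified Lean document; each statement's English description precedes it below -/
import Mathlib

section
/- For the binary CPE rejection objective E[(1-r(X))·ℓ(Y,h(X)) + c·r(X)] minimized over classifiers h: X→[0,1] and rejectors r: X→{0,1} with a proper loss ℓ, the optimal classifier is h*(x) = P[Y=1 | X=x] and the optimal rejector is r*(x) = 1 iff the conditional Bayes risk E_{Y~h*(x)}[ℓ(Y,h*(x))] ≥ c. -/
/-- A binary CPE loss `ℓ : Bool → [0,1] → ℝ≥0` is proper if for every `η ∈ [0,1]`,
the expected loss `q ↦ η·ℓ(1,q) + (1-η)·ℓ(0,q)` is minimized at `q = η`. -/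
def IsProperLoss (ℓ : Bool → ℝ → ℝ) : Prop :=
  ∀ η ∈ Set.Icc (0:ℝ) 1, ∀ q ∈ Set.Icc (0:ℝ) 1,
    η * ℓ true η + (1 - η) * ℓ false η ≤ η * ℓ true q + (1 - η) * ℓ false q

/-- Optimal CPE rejection (Chow's rule for proper losses): with `h*(x) = P[Y=1|X=x]` and
`r*(x) = 1` iff the conditional Bayes risk at `x` is at least `c`, the pair `(h*, r*)`
minimizes the rejection objective `E[(1-r(X))·ℓ(Y,h(X)) + c·r(X)]`. -/
theorem optimal_cpe_rejection
    {X : Type*} [Fintype X]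
    (P : X → ℝ) (hP : ∀ x, 0 ≤ P x) (hP1 : ∑ x, P x = 1)
    (η : X → ℝ) (hη : ∀ x, η x ∈ Set.Icc (0:ℝ) 1)
    (ℓ : Bool → ℝ → ℝ) (hℓ : ∀ y q, 0 ≤ ℓ y q) (hproper : IsProperLoss ℓ)
    (c : ℝ) (hc : 0 ≤ c)
    (h : X → ℝ) (hh : ∀ x, h x ∈ Set.Icc (0:ℝ) 1) (r : X → Bool) :
    (∑ x, P x *
        ((1 - (if (η x * ℓ true (η x) + (1 - η x) * ℓ false (η x)) ≥ c then (1:ℝ) else 0)) *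
            (η x * ℓ true (η x) + (1 - η x) * ℓ false (η x)) +
          c * (if (η x * ℓ true (η x) + (1 - η x) * ℓ false (η x)) ≥ c then (1:ℝ) else 0)))
      ≤
    ∑ x, P x *
        ((1 - (if r x then (1:ℝ) else 0)) *
            (η x * ℓ true (h x) + (1 - η x) * ℓ false (h x)) +
          c * (if r x then (1:ℝ) else 0)) := by
  apply Finset.sum_le_sum
  intro x _
  apply mul_le_mul_of_nonneg_left _ (hP x)
  set B := η x * ℓ true (η x) + (1 - η x) * ℓ false (η x) with hB
  have hB0 : 0 ≤ B := by
    have h1 := (hη x).1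
    have h2 := (hη x).2
    exact add_nonneg (mul_nonneg h1 (hℓ true (η x)))
      (mul_nonneg (by linarith) (hℓ false (η x)))
  have hBh : B ≤ η x * ℓ true (h x) + (1 - η x) * ℓ false (h x) :=
    hproper (η x) (hη x) (h x) (hh x)
  cases r x with
  | false =>
    simp only [if_neg, Bool.false_eq_true, if_false]
    split
    · next hge =>
      have : c ≤ B := hge
      nlinarith
    · nlinarith
  | true =>
    simp only [if_pos, if_true]
    split
    · next hge => nlinarith
    · next hlt =>
      push_neg at hlt
      nlinarith
end

section
/- With probability at least 1 − δ over N i.i.d. samples from P, the empirical KL density ratio ρ̂ satisfies sup_{x∈T} |ρ(x) − ρ̂(x)| ≤ exp(B/λ)³·sinh(B/λ)·√((2/N)·log(2M/δ)), where T ⊂ supp(P) has |T| = M and |L'| ≤ B. -/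
open MeasureTheory


private lemma hl_g_pos (p : ℝ) (hp0 : 0 ≤ p) (hp1 : p ≤ 1) (v : ℝ) :
    0 < 1 - p + p * Real.exp v := by
  rcases lt_or_eq_of_le hp1 with h | h
  · nlinarith [mul_nonneg hp0 (Real.exp_pos v).le]
  · subst h; simpa using Real.exp_pos v

private lemma hl_core (p u : ℝ) (hp0 : 0 ≤ p) (hp1 : p ≤ 1) :
    1 - p + p * Real.exp u ≤ Real.exp (p * u + u ^ 2 / 8) := by
  set g : ℝ → ℝ := fun v => 1 - p + p * Real.exp v with hgdef
  have hg : ∀ v, 0 < g v := hl_g_pos p hp0 hp1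
  set h : ℝ → ℝ := fun v => v ^ 2 / 8 + p * v - Real.log (g v) with hhdef
  set h1 : ℝ → ℝ := fun v => v / 4 + p - p * Real.exp v / g v with hh1def
  have hgd : ∀ v, HasDerivAt g (p * Real.exp v) v := fun v => by
    exact ((Real.hasDerivAt_exp v).const_mul p).const_add (1 - p)
  have hhd : ∀ v, HasDerivAt h (h1 v) v := by
    intro v
    have hlog : HasDerivAt (fun w => Real.log (g w)) (p * Real.exp v / g v) v :=
      (hgd v).log (hg v).ne'
    have h2 : HasDerivAt (fun w : ℝ => w ^ 2 / 8 + p * w)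
        ((2 : ℕ) * v ^ 1 / 8 + p * 1) v :=
      ((hasDerivAt_pow 2 v).div_const 8).add ((hasDerivAt_id v).const_mul p)
    have := h2.sub hlog
    refine this.congr_deriv ?_
    simp [hh1def]; ring
  have hh1d : ∀ v, HasDerivAt h1
      (1 / 4 - (p * Real.exp v * g v - p * Real.exp v * (p * Real.exp v)) / g v ^ 2) v := by
    intro v
    have hq : HasDerivAt (fun w => p * Real.exp w / g w)
        ((p * Real.exp v * g v - p * Real.exp v * (p * Real.exp v)) / g v ^ 2) v :=
      ((Real.hasDerivAt_exp v).const_mul p).div (hgd v) (hg v).ne'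
    exact (((hasDerivAt_id v).div_const 4).add_const p).sub hq
  have hh1mono : Monotone h1 := by
    apply monotone_of_deriv_nonneg (fun v => (hh1d v).differentiableAt)
    intro v
    rw [(hh1d v).deriv]
    have hgv := hg v
    rw [sub_nonneg, div_le_iff₀ (by positivity)]
    generalize g v = G at hgv ⊢
    nlinarith [sq_nonneg (G - 2 * (p * Real.exp v))]
  have hh10 : h1 0 = 0 := by simp [hh1def, hgdef]
  have hh0 : h 0 = 0 := by simp [hhdef, hgdef]
  have hnonneg : ∀ u, 0 ≤ h u := by
    intro u
    rcases le_total 0 u with hu | hu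
    · have : MonotoneOn h (Set.Ici 0) := by
        apply monotoneOn_of_deriv_nonneg (convex_Ici 0)
          (fun v _ => (hhd v).continuousAt.continuousWithinAt)
          (fun v _ => (hhd v).differentiableAt.differentiableWithinAt)
        intro v hv
        rw [(hhd v).deriv]
        have : h1 0 ≤ h1 v := hh1mono (le_of_lt (by simpa using hv))
        rw [hh10] at this; exact this
      have := this (Set.self_mem_Ici) (Set.mem_Ici.2 hu) hu
      rwa [hh0] at this
    · have : AntitoneOn h (Set.Iic 0) := by
        apply antitoneOn_of_deriv_nonpos (convex_Iic 0)
          (fun v _ => (hhd v).continuousAt.continuousWithinAt)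
          (fun v _ => (hhd v).differentiableAt.differentiableWithinAt)
        intro v hv
        rw [(hhd v).deriv]
        have : h1 v ≤ h1 0 := hh1mono (le_of_lt (by simpa using hv))
        rw [hh10] at this; exact this
      have := this (Set.mem_Iic.2 hu) (Set.self_mem_Iic) hu
      rwa [hh0] at this
  have key : Real.log (g u) ≤ p * u + u ^ 2 / 8 := by
    have := hnonneg u
    simp only [hhdef] at this
    linarith
  calc g u = Real.exp (Real.log (g u)) := (Real.exp_log (hg u)).symm
    _ ≤ Real.exp (p * u + u ^ 2 / 8) := Real.exp_le_exp.2 key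

private lemma weighted_mgf_le {X : Type*} [Fintype X] (p : X → ℝ) (hp : ∀ x, 0 ≤ p x)
    (hps : ∑ x, p x = 1) (Y : X → ℝ) (a b : ℝ) (hab : a < b)
    (hY : ∀ x, Y x ∈ Set.Icc a b) (hmean : ∑ x, p x * Y x = 0) (s : ℝ) :
    ∑ x, p x * Real.exp (s * Y x) ≤ Real.exp (s ^ 2 * (b - a) ^ 2 / 8) := by
  have hba : (0:ℝ) < b - a := by linarith
  have ha0 : a ≤ 0 := by
    have : ∑ x, p x * a ≤ ∑ x, p x * Y x :=
      Finset.sum_le_sum fun x _ => mul_le_mul_of_nonneg_left (hY x).1 (hp x)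
    rw [hmean, ← Finset.sum_mul, hps, one_mul] at this
    exact this
  have hb0 : 0 ≤ b := by
    have : ∑ x, p x * Y x ≤ ∑ x, p x * b :=
      Finset.sum_le_sum fun x _ => mul_le_mul_of_nonneg_left (hY x).2 (hp x)
    rw [hmean, ← Finset.sum_mul, hps, one_mul] at this
    exact this
  set E1 := Real.exp (s * a) with hE1
  set E2 := Real.exp (s * b) with hE2
  -- pointwise convexity bound
  have hpt : ∀ x, Real.exp (s * Y x) ≤
      ((b - Y x) * E1 + (Y x - a) * E2) / (b - a) := by
    intro x
    have h1 : (0:ℝ) ≤ (b - Y x) / (b - a) := by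
      apply div_nonneg _ hba.le; linarith [(hY x).2]
    have h2 : (0:ℝ) ≤ (Y x - a) / (b - a) := by
      apply div_nonneg _ hba.le; linarith [(hY x).1]
    have h3 : (b - Y x) / (b - a) + (Y x - a) / (b - a) = 1 := by
      field_simp
      ring
    have := convexOn_exp.2 (Set.mem_univ (s * a)) (Set.mem_univ (s * b)) h1 h2 h3
    simp only [smul_eq_mul] at this
    have harg : (b - Y x) / (b - a) * (s * a) + (Y x - a) / (b - a) * (s * b) = s * Y x := by
      field_simp; ring
    rw [harg] at this
    calc Real.exp (s * Y x) ≤ (b - Y x) / (b - a) * E1 + (Y x - a) / (b - a) * E2 := this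
      _ = ((b - Y x) * E1 + (Y x - a) * E2) / (b - a) := by ring
  have hsum : ∑ x, p x * Real.exp (s * Y x) ≤ (b * E1 - a * E2) / (b - a) := by
    calc ∑ x, p x * Real.exp (s * Y x)
        ≤ ∑ x, p x * (((b - Y x) * E1 + (Y x - a) * E2) / (b - a)) :=
          Finset.sum_le_sum fun x _ => mul_le_mul_of_nonneg_left (hpt x) (hp x)
      _ = ∑ x, (p x * ((b * E1 - a * E2) / (b - a)) + p x * Y x * ((E2 - E1) / (b - a))) := by
          apply Finset.sum_congr rfl; intro x _; field_simp; ring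
      _ = (∑ x, p x) * ((b * E1 - a * E2) / (b - a))
            + (∑ x, p x * Y x) * ((E2 - E1) / (b - a)) := by
          rw [Finset.sum_add_distrib, ← Finset.sum_mul, ← Finset.sum_mul]
      _ = (b * E1 - a * E2) / (b - a) := by rw [hps, hmean]; ring
  set q : ℝ := -a / (b - a) with hq
  have hq0 : 0 ≤ q := div_nonneg (by linarith) hba.le
  have hq1 : q ≤ 1 := by rw [hq, div_le_one hba]; linarith
  set u : ℝ := s * (b - a) with hu
  have hrw : (b * E1 - a * E2) / (b - a) = E1 * (1 - q + q * Real.exp u) := by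
    have : E2 = E1 * Real.exp u := by
      rw [hE1, hE2, hu, ← Real.exp_add]; ring_nf
    rw [this, hq]; field_simp; ring
  have hcore := hl_core q u hq0 hq1
  have hfin : E1 * (1 - q + q * Real.exp u) ≤ Real.exp (s ^ 2 * (b - a) ^ 2 / 8) := by
    have hE1pos : 0 < E1 := Real.exp_pos _
    calc E1 * (1 - q + q * Real.exp u) ≤ E1 * Real.exp (q * u + u ^ 2 / 8) :=
          mul_le_mul_of_nonneg_left hcore hE1pos.le
      _ = Real.exp (s * a + (q * u + u ^ 2 / 8)) := by rw [hE1, ← Real.exp_add]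
      _ = Real.exp (s ^ 2 * (b - a) ^ 2 / 8) := by
          congr 1
          rw [hq, hu]
          field_simp
          ring
  linarith [hsum, hrw ▸ hsum, hfin]

private lemma sum_prod_pi {X : Type*} [Fintype X] (N : ℕ) (f : X → ℝ) :
    ∑ ω : Fin N → X, ∏ i, f (ω i) = (∑ x, f x) ^ N := by
  classical
  rw [← Fintype.piFinset_univ, ← Finset.prod_univ_sum]
  simp

private lemma chernoff_finite {Ω : Type*} [Fintype Ω] (q : Ω → ℝ) (hq : ∀ ω, 0 ≤ q ω)
    (f : Ω → ℝ) (a s : ℝ) (hs : 0 ≤ s) [DecidablePred fun ω => a ≤ f ω] :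
    ∑ ω ∈ Finset.univ.filter (fun ω => a ≤ f ω), q ω
      ≤ Real.exp (-(s * a)) * ∑ ω, q ω * Real.exp (s * f ω) := by
  calc ∑ ω ∈ Finset.univ.filter (fun ω => a ≤ f ω), q ω
      ≤ ∑ ω ∈ Finset.univ.filter (fun ω => a ≤ f ω), q ω * Real.exp (s * f ω - s * a) := by
        apply Finset.sum_le_sum
        intro ω hω
        have hfa : a ≤ f ω := (Finset.mem_filter.1 hω).2
        have h1 : (1:ℝ) ≤ Real.exp (s * f ω - s * a) :=
          Real.one_le_exp (by nlinarith)
        nlinarith [hq ω]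
    _ ≤ ∑ ω, q ω * Real.exp (s * f ω - s * a) := by
        apply Finset.sum_le_sum_of_subset_of_nonneg (Finset.subset_univ _)
        intro ω _ _
        exact mul_nonneg (hq ω) (Real.exp_pos _).le
    _ = Real.exp (-(s * a)) * ∑ ω, q ω * Real.exp (s * f ω) := by
        rw [Finset.mul_sum]
        apply Finset.sum_congr rfl
        intro ω _
        rw [sub_eq_add_neg, Real.exp_add]
        ring

private lemma one_side {X : Type*} [Fintype X] (N : ℕ) (p : X → ℝ) (hp : ∀ x, 0 ≤ p x)
    (hps : ∑ x, p x = 1) (Y : X → ℝ) (a c : ℝ) (hc : 0 < c)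
    (hY : ∀ x, Y x ∈ Set.Icc a (a + 2 * c)) (hmean : ∑ x, p x * Y x = 0)
    (t : ℝ) (ht : 0 ≤ t)
    [DecidablePred fun ω : Fin N → X => (N : ℝ) * t ≤ ∑ i, Y (ω i)] :
    ∑ ω ∈ Finset.univ.filter (fun ω : Fin N → X => (N : ℝ) * t ≤ ∑ i, Y (ω i)),
        ∏ i, p (ω i)
      ≤ Real.exp (-(N : ℝ) * t ^ 2 / (2 * c ^ 2)) := by
  set s := t / c ^ 2 with hsdef
  have hs : 0 ≤ s := div_nonneg ht (by positivity)
  have hcher := chernoff_finite (fun ω : Fin N → X => ∏ i, p (ω i))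
      (fun ω => Finset.prod_nonneg fun i _ => hp _)
      (fun ω => ∑ i, Y (ω i)) ((N : ℝ) * t) s hs
  have hmgf : ∑ ω : Fin N → X, (∏ i, p (ω i)) * Real.exp (s * ∑ i, Y (ω i))
      = (∑ x, p x * Real.exp (s * Y x)) ^ N := by
    rw [← sum_prod_pi N (fun x => p x * Real.exp (s * Y x))]
    apply Finset.sum_congr rfl
    intro ω _
    rw [Finset.mul_sum, Real.exp_sum, ← Finset.prod_mul_distrib]
  have hone : ∑ x, p x * Real.exp (s * Y x) ≤ Real.exp (s ^ 2 * c ^ 2 / 2) := by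
    have := weighted_mgf_le p hp hps Y a (a + 2 * c) (by linarith) hY hmean s
    have harg : s ^ 2 * (a + 2 * c - a) ^ 2 / 8 = s ^ 2 * c ^ 2 / 2 := by ring
    rwa [harg] at this
  have hpow : (∑ x, p x * Real.exp (s * Y x)) ^ N
      ≤ Real.exp ((N : ℝ) * (s ^ 2 * c ^ 2 / 2)) := by
    calc (∑ x, p x * Real.exp (s * Y x)) ^ N ≤ (Real.exp (s ^ 2 * c ^ 2 / 2)) ^ N :=
          pow_le_pow_left₀ (Finset.sum_nonneg fun x _ =>
            mul_nonneg (hp x) (Real.exp_pos _).le) hone N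
      _ = Real.exp ((N : ℝ) * (s ^ 2 * c ^ 2 / 2)) := by
          rw [← Real.exp_nat_mul]
  calc ∑ ω ∈ Finset.univ.filter (fun ω : Fin N → X => (N : ℝ) * t ≤ ∑ i, Y (ω i)),
        ∏ i, p (ω i)
      ≤ Real.exp (-(s * ((N : ℝ) * t))) *
          ∑ ω : Fin N → X, (∏ i, p (ω i)) * Real.exp (s * ∑ i, Y (ω i)) := hcher
    _ ≤ Real.exp (-(s * ((N : ℝ) * t))) * Real.exp ((N : ℝ) * (s ^ 2 * c ^ 2 / 2)) := by
        apply mul_le_mul_of_nonneg_left _ (Real.exp_pos _).le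
        rw [hmgf]; exact hpow
    _ = Real.exp (-(s * ((N : ℝ) * t)) + (N : ℝ) * (s ^ 2 * c ^ 2 / 2)) := by
        rw [← Real.exp_add]
    _ = Real.exp (-(N : ℝ) * t ^ 2 / (2 * c ^ 2)) := by
        congr 1
        rw [hsdef]
        field_simp
        ring

private lemma measure_coe_finset {α : Type*} [MeasurableSpace α] [MeasurableSingletonClass α]
    (ν : MeasureTheory.Measure α) [MeasureTheory.IsFiniteMeasure ν] (F : Finset α) :
    (ν ↑F).toReal = ∑ ω ∈ F, (ν {ω}).toReal := by
  have h1 : (↑F : Set α) = ⋃ ω ∈ F, {ω} := by ext x; simp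
  rw [h1, MeasureTheory.measure_biUnion_finset
    (fun a _ b _ hab => Set.disjoint_singleton.2 hab)
    (fun ω _ => measurableSet_singleton ω),
    ENNReal.toReal_sum (fun ω _ => MeasureTheory.measure_ne_top _ _)]

private lemma ratio_bound (wx Z Zh em eB t : ℝ) (hem : 0 < em) (hwx1 : em ≤ wx)
    (hwx2 : wx ≤ eB) (hZ : em ≤ Z) (hZh : em ≤ Zh) (hd : |Zh - Z| ≤ t)
    (hmul : em * eB = 1) (ht : 0 ≤ t) :
    |wx / Z - wx / Zh| ≤ eB ^ 3 * t := by
  have hZpos : 0 < Z := lt_of_lt_of_le hem hZ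
  have hZhpos : 0 < Zh := lt_of_lt_of_le hem hZh
  have heBpos : 0 < eB := by nlinarith
  have hwxpos : 0 < wx := lt_of_lt_of_le hem hwx1
  have key : wx / Z - wx / Zh = wx * (Zh - Z) / (Z * Zh) := by
    field_simp
  rw [key, abs_div, abs_mul, abs_of_pos hwxpos, abs_of_pos (mul_pos hZpos hZhpos)]
  have h1 : wx * |Zh - Z| ≤ eB * t := mul_le_mul hwx2 hd (abs_nonneg _) heBpos.le
  have h2 : em * em ≤ Z * Zh := mul_le_mul hZ hZh hem.le hZpos.le
  have h3 : wx * |Zh - Z| / (Z * Zh) ≤ eB * t / (em * em) :=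
    div_le_div₀ (mul_nonneg heBpos.le ht) h1 (by positivity) h2
  have hemeq : em = eB⁻¹ := by field_simp; linarith [hmul]
  have h4 : eB * t / (em * em) = eB ^ 3 * t := by
    rw [hemeq]; field_simp
  linarith

/-- Generalization bound for the empirical KL density ratio: with probability at least `1-δ`
over `N` i.i.d. samples from `P`, uniformly over a test set `T ⊂ supp(P)` of size `M`,
`|ρ(x) - ρ̂(x)| ≤ exp(B/lam)³·sinh(B/lam)·√((2/N)·log(2M/δ))`. -/
theorem kl_ratio_generalization_bound
    {X : Type*} [Fintype X] [MeasurableSpace X] [MeasurableSingletonClass X]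
    (ν : Measure X) [IsProbabilityMeasure ν]
    (L' : X → ℝ) (B lam : ℝ) (hB : 0 < B) (hlam : 0 < lam) (hL : ∀ x, |L' x| ≤ B)
    (N : ℕ) (hN : 0 < N)
    (T : Finset X) (M : ℕ) (hM : T.card = M) (hMpos : 0 < M)
    (hsupp : ∀ x ∈ T, ν {x} ≠ 0)
    (δ : ℝ) (hδ : δ ∈ Set.Ioo (0:ℝ) 1) :
    let Z : ℝ := ∫ x, Real.exp (-L' x / lam) ∂ν
    let ρ : X → ℝ := fun x => Real.exp (-L' x / lam) / Z
    let μ : Measure (Fin N → X) := Measure.pi fun _ => ν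
    (μ {ω | ∀ x ∈ T,
        |ρ x - Real.exp (-L' x / lam) /
            ((N:ℝ)⁻¹ * ∑ i, Real.exp (-L' (ω i) / lam))|
          ≤ (Real.exp (B / lam))^3 * Real.sinh (B / lam) *
              Real.sqrt ((2 / (N:ℝ)) * Real.log (2 * M / δ))}).toReal
      ≥ 1 - δ := by
  classical
  intro Z ρ μ
  have hμdef : μ = MeasureTheory.Measure.pi fun _ : Fin N => ν := rfl
  haveI : MeasureTheory.IsProbabilityMeasure μ :=
    inferInstanceAs (MeasureTheory.IsProbabilityMeasure (MeasureTheory.Measure.pi fun _ : Fin N => ν))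
  set p : X → ℝ := fun x => (ν {x}).toReal with hpdef
  have hp : ∀ x, 0 ≤ p x := fun x => ENNReal.toReal_nonneg
  have hps : ∑ x, p x = 1 := by
    have h := (measure_coe_finset ν (Finset.univ : Finset X)).symm
    rwa [Finset.coe_univ, MeasureTheory.measure_univ, ENNReal.toReal_one] at h
  have hNpos : (0:ℝ) < (N:ℝ) := Nat.cast_pos.2 hN
  have hMpos' : (1:ℝ) ≤ (M:ℝ) := by exact_mod_cast hMpos
  set eB : ℝ := Real.exp (B / lam) with heBdef
  set em : ℝ := Real.exp (-(B / lam)) with hemdef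
  have hempos : 0 < em := Real.exp_pos _
  have heBpos : 0 < eB := Real.exp_pos _
  have hmul : em * eB = 1 := by rw [hemdef, heBdef, ← Real.exp_add]; simp
  have hw_mem : ∀ x, em ≤ Real.exp (-L' x / lam) ∧ Real.exp (-L' x / lam) ≤ eB := by
    intro x
    have h1 := (abs_le.1 (hL x)).1
    have h2 := (abs_le.1 (hL x)).2
    constructor
    · apply Real.exp_le_exp.2
      rw [← neg_div]
      exact (div_le_div_iff_of_pos_right hlam).2 (by linarith)
    · apply Real.exp_le_exp.2
      exact (div_le_div_iff_of_pos_right hlam).2 (by linarith)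
  have hZsum : Z = ∑ x, p x * Real.exp (-L' x / lam) := by
    have : Z = ∫ x, Real.exp (-L' x / lam) ∂ν := rfl
    rw [this, MeasureTheory.integral_fintype MeasureTheory.Integrable.of_finite]
    simp [hpdef, smul_eq_mul, Measure.real]
  have hZ_ge : em ≤ Z := by
    rw [hZsum]
    calc em = ∑ x, p x * em := by rw [← Finset.sum_mul, hps, one_mul]
      _ ≤ ∑ x, p x * Real.exp (-L' x / lam) :=
        Finset.sum_le_sum fun x _ => mul_le_mul_of_nonneg_left (hw_mem x).1 (hp x)
  set c : ℝ := Real.sinh (B / lam) with hcdef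
  have hc : 0 < c := Real.sinh_pos_iff.2 (div_pos hB hlam)
  have h2c : em + 2 * c = eB := by rw [hcdef, Real.sinh_eq, heBdef, hemdef]; ring
  set L0 : ℝ := Real.log (2 * M / δ) with hL0def
  have hL0 : 0 < L0 := by
    apply Real.log_pos
    rw [lt_div_iff₀ hδ.1]
    nlinarith [hδ.2]
  set r : ℝ := Real.sqrt ((2 / (N:ℝ)) * L0) with hrdef
  have hr0 : 0 ≤ r := Real.sqrt_nonneg _
  have hr2 : r ^ 2 = (2 / (N:ℝ)) * L0 := Real.sq_sqrt (by positivity)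
  set t : ℝ := c * r with htdef
  have ht0 : 0 ≤ t := mul_nonneg hc.le hr0
  -- the good event
  set G : Set (Fin N → X) := {ω | |((N:ℝ)⁻¹ * ∑ i, Real.exp (-L' (ω i) / lam)) - Z| ≤ t}
    with hGdef
  -- G is contained in the target event
  have hGE : G ⊆ {ω | ∀ x ∈ T,
      |ρ x - Real.exp (-L' x / lam) /
          ((N:ℝ)⁻¹ * ∑ i, Real.exp (-L' (ω i) / lam))| ≤ eB ^ 3 * c * r} := by
    intro ω hω x _
    have hZh_ge : em ≤ (N:ℝ)⁻¹ * ∑ i, Real.exp (-L' (ω i) / lam) := by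
      have hsum : (N:ℝ) * em ≤ ∑ i, Real.exp (-L' (ω i) / lam) := by
        calc (N:ℝ) * em = ∑ _i : Fin N, em := by
              rw [Finset.sum_const, Finset.card_univ, Fintype.card_fin, nsmul_eq_mul]
          _ ≤ ∑ i, Real.exp (-L' (ω i) / lam) :=
              Finset.sum_le_sum fun i _ => (hw_mem (ω i)).1
      calc em = (N:ℝ)⁻¹ * ((N:ℝ) * em) := by field_simp
        _ ≤ (N:ℝ)⁻¹ * ∑ i, Real.exp (-L' (ω i) / lam) :=
            mul_le_mul_of_nonneg_left hsum (by positivity)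
    have := ratio_bound (Real.exp (-L' x / lam)) Z
      ((N:ℝ)⁻¹ * ∑ i, Real.exp (-L' (ω i) / lam)) em eB t hempos
      (hw_mem x).1 (hw_mem x).2 hZ_ge hZh_ge hω hmul ht0
    have hρx : ρ x = Real.exp (-L' x / lam) / Z := rfl
    rw [Set.mem_setOf_eq, hρx, ← mul_assoc] at *
    exact this
  have hsingle : ∀ ω : Fin N → X, (μ {ω}).toReal = ∏ i, p (ω i) := by
    intro ω
    have h1 : ({ω} : Set (Fin N → X)) = Set.univ.pi fun i => {ω i} :=
      (Set.univ_pi_singleton ω).symm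
    rw [hμdef, h1, MeasureTheory.Measure.pi_pi, ENNReal.toReal_prod]
  have hside : ∀ (Y : X → ℝ) (a : ℝ), (∀ x, Y x ∈ Set.Icc a (a + 2 * c)) →
      (∑ x, p x * Y x = 0) →
      (μ {ω : Fin N → X | (N:ℝ) * t ≤ ∑ i, Y (ω i)}).toReal ≤ δ / 2 := by
    intro Y a hY hmean
    have hset : {ω : Fin N → X | (N:ℝ) * t ≤ ∑ i, Y (ω i)}
        = ↑(Finset.univ.filter fun ω : Fin N → X => (N:ℝ) * t ≤ ∑ i, Y (ω i)) := by
      ext ω; simp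
    rw [hset, measure_coe_finset]
    rw [Finset.sum_congr rfl fun ω _ => hsingle ω]
    refine le_trans (one_side N p hp hps Y a c hc hY hmean t ht0) ?_
    have hexp_eq : -(N:ℝ) * t ^ 2 / (2 * c ^ 2) = -L0 := by
      have ht2 : t ^ 2 = c ^ 2 * ((2 / (N:ℝ)) * L0) := by
        rw [htdef, mul_pow, hr2]
      rw [ht2]
      field_simp
    rw [hexp_eq]
    have hexpL : Real.exp (-L0) = δ / (2 * M) := by
      rw [Real.exp_neg, hL0def, Real.exp_log (div_pos (by nlinarith [hMpos']) hδ.1), inv_div]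
    rw [hexpL]
    rw [div_le_div_iff₀ (by positivity) (by norm_num)]
    nlinarith [hδ.1.le]
  have hGc : Gᶜ ⊆ {ω : Fin N → X | (N:ℝ) * t ≤ ∑ i, (Real.exp (-L' (ω i) / lam) - Z)}
      ∪ {ω : Fin N → X | (N:ℝ) * t ≤ ∑ i, (Z - Real.exp (-L' (ω i) / lam))} := by
    intro ω hω
    simp only [hGdef, Set.mem_compl_iff, Set.mem_setOf_eq, not_le] at hω
    have hNne : (N:ℝ) ≠ 0 := hNpos.ne'
    have hsum1 : ∑ i, (Real.exp (-L' (ω i) / lam) - Z)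
        = (∑ i, Real.exp (-L' (ω i) / lam)) - (N:ℝ) * Z := by
      rw [Finset.sum_sub_distrib, Finset.sum_const, Finset.card_univ, Fintype.card_fin,
        nsmul_eq_mul]
    have hsum2 : ∑ i, (Z - Real.exp (-L' (ω i) / lam))
        = (N:ℝ) * Z - ∑ i, Real.exp (-L' (ω i) / lam) := by
      rw [Finset.sum_sub_distrib, Finset.sum_const, Finset.card_univ, Fintype.card_fin,
        nsmul_eq_mul]
    rcases lt_abs.1 hω with h | h
    · left
      rw [Set.mem_setOf_eq, hsum1]
      have h2 : (N:ℝ) * t ≤ (N:ℝ) * (((N:ℝ)⁻¹ * ∑ i, Real.exp (-L' (ω i) / lam)) - Z) :=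
        mul_le_mul_of_nonneg_left h.le hNpos.le
      have h3 : (N:ℝ) * (((N:ℝ)⁻¹ * ∑ i, Real.exp (-L' (ω i) / lam)) - Z)
          = (∑ i, Real.exp (-L' (ω i) / lam)) - (N:ℝ) * Z := by
        field_simp
      linarith
    · right
      rw [Set.mem_setOf_eq, hsum2]
      rw [neg_sub] at h
      have h2 : (N:ℝ) * t ≤ (N:ℝ) * (Z - ((N:ℝ)⁻¹ * ∑ i, Real.exp (-L' (ω i) / lam))) :=
        mul_le_mul_of_nonneg_left h.le hNpos.le
      have h3 : (N:ℝ) * (Z - ((N:ℝ)⁻¹ * ∑ i, Real.exp (-L' (ω i) / lam)))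
          = (N:ℝ) * Z - ∑ i, Real.exp (-L' (ω i) / lam) := by
        field_simp
      linarith
  have hGmeas : MeasurableSet G := Set.Finite.measurableSet (Set.toFinite G)
  have hcompl : (μ G).toReal + (μ Gᶜ).toReal = 1 := by
    have h := MeasureTheory.measure_add_measure_compl (μ := μ) hGmeas
    rw [MeasureTheory.measure_univ] at h
    calc (μ G).toReal + (μ Gᶜ).toReal = (μ G + μ Gᶜ).toReal :=
        (ENNReal.toReal_add (MeasureTheory.measure_ne_top _ _)
          (MeasureTheory.measure_ne_top _ _)).symm
      _ = 1 := by rw [h]; exact ENNReal.toReal_one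
  have hmean1 : ∑ x, p x * (Real.exp (-L' x / lam) - Z) = 0 := by
    have : ∑ x, p x * (Real.exp (-L' x / lam) - Z)
        = (∑ x, p x * Real.exp (-L' x / lam)) - (∑ x, p x) * Z := by
      rw [Finset.sum_mul, ← Finset.sum_sub_distrib]
      apply Finset.sum_congr rfl
      intro x _; ring
    rw [this, hps, ← hZsum]; ring
  have hmean2 : ∑ x, p x * (Z - Real.exp (-L' x / lam)) = 0 := by
    have : ∑ x, p x * (Z - Real.exp (-L' x / lam))
        = -(∑ x, p x * (Real.exp (-L' x / lam) - Z)) := by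
      rw [← Finset.sum_neg_distrib]
      apply Finset.sum_congr rfl
      intro x _; ring
    rw [this, hmean1]; ring
  have hb1 := hside (fun x => Real.exp (-L' x / lam) - Z) (em - Z)
    (fun x => ⟨by linarith [(hw_mem x).1], by
      have := (hw_mem x).2; linarith⟩) hmean1
  have hb2 := hside (fun x => Z - Real.exp (-L' x / lam)) (Z - eB)
    (fun x => ⟨by linarith [(hw_mem x).2], by
      have := (hw_mem x).1; linarith⟩) hmean2
  have hbad : (μ Gᶜ).toReal ≤ δ := by
    have hμle : μ Gᶜ ≤ μ {ω : Fin N → X | (N:ℝ) * t ≤ ∑ i, (Real.exp (-L' (ω i) / lam) - Z)}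
        + μ {ω : Fin N → X | (N:ℝ) * t ≤ ∑ i, (Z - Real.exp (-L' (ω i) / lam))} :=
      le_trans (MeasureTheory.measure_mono hGc) (MeasureTheory.measure_union_le _ _)
    have h2 : (μ Gᶜ).toReal
        ≤ (μ {ω : Fin N → X | (N:ℝ) * t ≤ ∑ i, (Real.exp (-L' (ω i) / lam) - Z)}).toReal
          + (μ {ω : Fin N → X | (N:ℝ) * t ≤ ∑ i, (Z - Real.exp (-L' (ω i) / lam))}).toReal := by
      have h3 := ENNReal.toReal_mono (ENNReal.add_ne_top.2
        ⟨MeasureTheory.measure_ne_top _ _, MeasureTheory.measure_ne_top _ _⟩) hμle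
      rwa [ENNReal.toReal_add (MeasureTheory.measure_ne_top _ _)
        (MeasureTheory.measure_ne_top _ _)] at h3
    linarith
  have hmono : (μ G).toReal ≤ (μ {ω | ∀ x ∈ T,
      |ρ x - Real.exp (-L' x / lam) /
          ((N:ℝ)⁻¹ * ∑ i, Real.exp (-L' (ω i) / lam))| ≤ eB ^ 3 * c * r}).toReal :=
    ENNReal.toReal_mono (MeasureTheory.measure_ne_top _ _) (MeasureTheory.measure_mono hGE)
  linarith
end

section
/- In the squared-loss regression setting with objective E[(1−r(X))·(1/2)(Y−h(X))² + c·r(X)], the optimal regressor is h*(x) = E[Y | X=x] and the optimal rejector is r*(x) = 1 iff (1/2)·σ²(x) ≥ c, where σ²(x) = Var(Y | X=x) is the conditional variance. -/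
/-- Optimal regression with rejection (squared loss): for the objective
`E[(1-r(X))·(1/2)(Y-h(X))² + c·r(X)]` over a (finitely supported) joint distribution of
`(X, Y)`, the optimal regressor is the conditional mean `m(x) = E[Y|X=x]` and the optimal
rejector is `r*(x) = 1` iff `(1/2)·σ²(x) ≥ c`, where `σ²(x) = Var(Y|X=x)`. -/
theorem optimal_regression_rejection
    {𝒳 V : Type*} [Fintype 𝒳] [Fintype V]
    (P : 𝒳 → V → ℝ) (hP : ∀ x v, 0 ≤ P x v) (hP1 : ∑ x, ∑ v, P x v = 1)
    (y : V → ℝ) (m σ2 : 𝒳 → ℝ)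
    (hm : ∀ x, ∑ v, P x v * y v = m x * ∑ v, P x v)          -- `m` is the conditional mean
    (hσ2 : ∀ x, ∑ v, P x v * (y v - m x)^2 = σ2 x * ∑ v, P x v) -- `σ2` is the cond. variance
    (hσ2nn : ∀ x, 0 ≤ σ2 x)
    (c : ℝ) (hc : 0 ≤ c)
    (h : 𝒳 → ℝ) (r : 𝒳 → Bool) :
    (∑ x, ∑ v, P x v *
        ((1 - (if (1/2 : ℝ) * σ2 x ≥ c then (1:ℝ) else 0)) * ((1/2) * (y v - m x)^2) +
          c * (if (1/2 : ℝ) * σ2 x ≥ c then (1:ℝ) else 0)))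
      ≤
    ∑ x, ∑ v, P x v *
        ((1 - (if r x then (1:ℝ) else 0)) * ((1/2) * (y v - h x)^2) +
          c * (if r x then (1:ℝ) else 0)) := by
  apply Finset.sum_le_sum
  intro x _
  set S : ℝ := ∑ v, P x v with hS
  have hSnn : 0 ≤ S := Finset.sum_nonneg fun v _ => hP x v
  have hP0 : ∑ v, P x v * (y v - m x) = 0 := by
    have := hm x
    simp only [mul_sub]
    rw [Finset.sum_sub_distrib, this, ← Finset.sum_mul]
    ring
  have hvar : ∑ v, P x v * (y v - h x)^2 = (σ2 x + (m x - h x)^2) * S := by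
    have key : ∀ v, P x v * (y v - h x)^2 =
        P x v * (y v - m x)^2 + (2 * (m x - h x)) * (P x v * (y v - m x))
        + (m x - h x)^2 * P x v := by
      intro v; ring
    rw [Finset.sum_congr rfl fun v _ => key v]
    rw [Finset.sum_add_distrib, Finset.sum_add_distrib, hσ2 x, ← Finset.mul_sum,
      ← Finset.mul_sum, hP0, ← hS]
    ring
  -- compute both sides
  by_cases hb : (1/2 : ℝ) * σ2 x ≥ c
  · -- left = c * S
    have hl : ∑ v, P x v *
        ((1 - (if (1/2 : ℝ) * σ2 x ≥ c then (1:ℝ) else 0)) * ((1/2) * (y v - m x)^2) +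
          c * (if (1/2 : ℝ) * σ2 x ≥ c then (1:ℝ) else 0)) = c * S := by
      simp only [if_pos hb]
      simp [← Finset.mul_sum, hS, mul_comm]
    rw [hl]
    cases hr : r x
    · simp only [hr, if_neg Bool.false_ne_true]
      have : ∑ v, P x v * ((1 - 0) * (1/2 * (y v - h x)^2) + c * 0)
          = (1/2) * ((σ2 x + (m x - h x)^2) * S) := by
        rw [← hvar, Finset.mul_sum]
        apply Finset.sum_congr rfl; intro v _; ring
      rw [this, ← hvar]
      have h1 : c * S ≤ (1/2 * σ2 x) * S := mul_le_mul_of_nonneg_right hb hSnn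
      have h2 : (1/2 * σ2 x) * S ≤ 1/2 * ((σ2 x + (m x - h x)^2) * S) := by
        have : (0:ℝ) ≤ (m x - h x)^2 * S := mul_nonneg (sq_nonneg _) hSnn
        nlinarith
      rw [hvar]; linarith
    · simp only [hr, eq_self_iff_true, if_true]
      have : ∑ v, P x v * ((1 - 1) * (1/2 * (y v - h x)^2) + c * 1) = c * S := by
        simp [← Finset.mul_sum, hS, mul_comm]
      rw [this]
  · -- left = (1/2) σ2 x * S
    have hl : ∑ v, P x v *
        ((1 - (if (1/2 : ℝ) * σ2 x ≥ c then (1:ℝ) else 0)) * ((1/2) * (y v - m x)^2) +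
          c * (if (1/2 : ℝ) * σ2 x ≥ c then (1:ℝ) else 0)) = (1/2) * (σ2 x * S) := by
      simp only [if_neg hb]
      rw [← hσ2 x, Finset.mul_sum]
      apply Finset.sum_congr rfl; intro v _; ring
    rw [hl]
    cases hr : r x
    · simp only [hr, if_neg Bool.false_ne_true]
      have : ∑ v, P x v * ((1 - 0) * (1/2 * (y v - h x)^2) + c * 0)
          = (1/2) * ((σ2 x + (m x - h x)^2) * S) := by
        rw [← hvar, Finset.mul_sum]
        apply Finset.sum_congr rfl; intro v _; ring
      rw [this]
      have : (0:ℝ) ≤ (m x - h x)^2 * S := mul_nonneg (sq_nonneg _) hSnn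
      nlinarith
    · simp only [hr, eq_self_iff_true, if_true]
      have he : ∑ v, P x v * ((1 - 1) * (1/2 * (y v - h x)^2) + c * 1) = c * S := by
        simp [← Finset.mul_sum, hS, mul_comm]
      rw [he]
      push_neg at hb
      nlinarith
end
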